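/- Let b be a prime, α, β > 1 reals, θ = min(α,β), and let 0 < γ_j^{(1)} ≤ 1, 0 < γ_j^{(2)} ≤ 1 for all j. Then for every real M ≥ 1 and all s,t ∈ ℕ, the set A_M = {(k,l) ∈ ℕ^s × ℤ^t : (ρ_{α,γ^{(1)}}(k))^{-1}·(r_{β,γ^{(2)}}(l))^{-1} ≤ M} is contained (under the inclusion ℕ ⊆ ℤ in each of the first s coordinates) in the set {(k,l) ∈ ℤ^s × ℤ^t : ∏_{j=1}^s (r_{θ, b^α γ_j^{(1)}}(k_j))^{-1} · ∏_{j=1}^t (r_{θ, γ_j^{(2)}}(l_j))^{-1} ≤ M}. -/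

import Mathlib

/-!
Factor by factor the new weights dominate the old ones. For `k ≥ 1` with `L = ⌊log_b k⌋` we have
`k < b^(L+1)`, so `b^(-αL) = b^α · b^(-α(L+1)) ≤ b^α k^(-α) ≤ b^α k^(-θ)`, and `r_{x,γ}` decreases in
the exponent `x ≥ θ`. Inverting the positive weights reverses these inequalities.
-/

open scoped BigOperators

/-- The Walsh-space decay function ρ_{α,γ} : ℕ → ℝ,
    ρ_{α,γ}(0) = 1 and ρ_{α,γ}(k) = γ·b^{-α·⌊log_b k⌋} for k ≥ 1. -/
noncomputable def rho (b : ℕ) (α γ : ℝ) (k : ℕ) : ℝ :=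
  if k = 0 then 1 else γ * (b : ℝ) ^ (-(α * (Nat.log b k : ℝ)))

/-- The Korobov-space decay function r_{x,γ} : ℤ → ℝ,
    r_{x,γ}(0) = 1 and r_{x,γ}(l) = γ·|l|^{-x} for l ≠ 0. -/
noncomputable def rK (x γ : ℝ) (l : ℤ) : ℝ :=
  if l = 0 then 1 else γ * |(l : ℝ)| ^ (-x)

theorem Finset.prod_inv_le_prod_inv {ι K : Type*} [Field K] [LinearOrder K] [IsStrictOrderedRing K]
    (s : Finset ι) {f g : ι → K} (hf : ∀ i ∈ s, 0 < f i) (hfg : ∀ i ∈ s, f i ≤ g i) :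
    ∏ i ∈ s, (g i)⁻¹ ≤ ∏ i ∈ s, (f i)⁻¹ :=
  Finset.prod_le_prod (fun i hi => inv_nonneg.2 ((hf i hi).trans_le (hfg i hi)).le)
    fun i hi => inv_anti₀ (hf i hi) (hfg i hi)

lemma rho_pos {b : ℕ} (hb : 1 < b) (α : ℝ) {γ : ℝ} (hγ : 0 < γ) (k : ℕ) : 0 < rho b α γ k := by
  unfold rho
  split_ifs
  · exact one_pos
  · exact mul_pos hγ (Real.rpow_pos_of_pos (by positivity) _)

lemma rK_pos (x : ℝ) {γ : ℝ} (hγ : 0 < γ) (l : ℤ) : 0 < rK x γ l := by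
  unfold rK
  split_ifs with hl
  · exact one_pos
  · exact mul_pos hγ (Real.rpow_pos_of_pos (by positivity) _)

lemma rK_le_rK_of_le {x y γ : ℝ} (hγ : 0 ≤ γ) (hxy : x ≤ y) (l : ℤ) : rK y γ l ≤ rK x γ l := by
  unfold rK
  split_ifs with hl
  · exact le_rfl
  · have hl1 : (1 : ℝ) ≤ |(l : ℝ)| := by exact_mod_cast Int.one_le_abs hl
    gcongr

lemma rho_le_rK {b : ℕ} (hb : 1 < b) {α θ γ : ℝ} (hγ : 0 ≤ γ) (hα : 0 ≤ α) (hθα : θ ≤ α)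
    (k : ℕ) : rho b α γ k ≤ rK θ ((b : ℝ) ^ α * γ) (k : ℤ) := by
  rcases Nat.eq_zero_or_pos k with rfl | hk
  · simp [rho, rK]
  have hb0 : (0 : ℝ) < b := by positivity
  have hk1 : (1 : ℝ) ≤ k := by exact_mod_cast hk
  set L := Nat.log b k
  have hkb : (k : ℝ) ≤ (b : ℝ) ^ ((L : ℝ) + 1) := by
    rw [← Nat.cast_succ, Real.rpow_natCast]
    exact_mod_cast (Nat.lt_pow_succ_log_self hb k).le
  have hdecay : (b : ℝ) ^ (-(α * ((L : ℝ) + 1))) ≤ (k : ℝ) ^ (-θ) :=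
    calc (b : ℝ) ^ (-(α * ((L : ℝ) + 1)))
        = ((b : ℝ) ^ ((L : ℝ) + 1)) ^ (-α) := by rw [← Real.rpow_mul hb0.le]; ring_nf
      _ ≤ (k : ℝ) ^ (-α) := Real.rpow_le_rpow_of_nonpos (by positivity) hkb (neg_nonpos.2 hα)
      _ ≤ (k : ℝ) ^ (-θ) := Real.rpow_le_rpow_of_exponent_le hk1 (neg_le_neg hθα)
  rw [rho, rK, if_neg hk.ne', if_neg (by positivity), Int.cast_natCast, Nat.abs_cast]
  calc γ * (b : ℝ) ^ (-(α * L))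
      = (b : ℝ) ^ α * γ * (b : ℝ) ^ (-(α * ((L : ℝ) + 1))) := by
        rw [mul_comm _ γ, mul_assoc, ← Real.rpow_add hb0]; ring_nf
    _ ≤ (b : ℝ) ^ α * γ * (k : ℝ) ^ (-θ) := by gcongr

theorem stmt_2_general (b : ℕ) (hb : b.Prime) (α β : ℝ) (hα : 1 < α)
    (θ : ℝ) (hθ : θ = min α β)
    (γ1 γ2 : ℕ → ℝ) (hγ1 : ∀ j, 0 < γ1 j ∧ γ1 j ≤ 1) (hγ2 : ∀ j, 0 < γ2 j ∧ γ2 j ≤ 1)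
    (M : ℝ) (s t : ℕ) (k : Fin s → ℕ) (l : Fin t → ℤ)
    (h : (∏ j : Fin s, rho b α (γ1 j) (k j))⁻¹ * (∏ j : Fin t, rK β (γ2 j) (l j))⁻¹ ≤ M) :
    (∏ j : Fin s, (rK θ ((b : ℝ) ^ α * γ1 j) (k j : ℤ))⁻¹) *
      (∏ j : Fin t, (rK θ (γ2 j) (l j))⁻¹) ≤ M := by
  have hθα : θ ≤ α := hθ ▸ min_le_left α β
  have hθβ : θ ≤ β := hθ ▸ min_le_right α β
  have hwalsh := (Finset.univ : Finset (Fin s)).prod_inv_le_prod_inv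
    (fun j _ => rho_pos hb.one_lt α (hγ1 j).1 (k j))
    (fun j _ => rho_le_rK hb.one_lt (hγ1 j).1.le (by linarith) hθα (k j))
  have hkorobov := (Finset.univ : Finset (Fin t)).prod_inv_le_prod_inv
    (fun j _ => rK_pos β (hγ2 j).1 (l j))
    (fun j _ => rK_le_rK_of_le (hγ2 j).1.le hθβ (l j))
  rw [← Finset.prod_inv_distrib, ← Finset.prod_inv_distrib] at h
  refine le_trans (mul_le_mul hwalsh hkorobov ?_ ?_) h
  · exact Finset.prod_nonneg fun j _ => inv_nonneg.2 (rK_pos θ (hγ2 j).1 (l j)).le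
  · exact Finset.prod_nonneg fun j _ => inv_nonneg.2 (rho_pos hb.one_lt α (hγ1 j).1 (k j)).le

theorem stmt_2 (b : ℕ) (hb : b.Prime) (α β : ℝ) (hα : 1 < α) (hβ : 1 < β)
    (θ : ℝ) (hθ : θ = min α β)
    (γ1 γ2 : ℕ → ℝ) (hγ1 : ∀ j, 0 < γ1 j ∧ γ1 j ≤ 1) (hγ2 : ∀ j, 0 < γ2 j ∧ γ2 j ≤ 1)
    (M : ℝ) (hM : 1 ≤ M) (s t : ℕ) (k : Fin s → ℕ) (l : Fin t → ℤ)
    (h : (∏ j : Fin s, rho b α (γ1 j) (k j))⁻¹ * (∏ j : Fin t, rK β (γ2 j) (l j))⁻¹ ≤ M) :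
    (∏ j : Fin s, (rK θ ((b : ℝ) ^ α * γ1 j) (k j : ℤ))⁻¹) *
      (∏ j : Fin t, (rK θ (γ2 j) (l j))⁻¹) ≤ M :=
  stmt_2_general b hb α β hα θ hθ γ1 γ2 hγ1 hγ2 M s t k l h
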